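/- A tree (connected acyclic undirected graph) is arbitrarily regularizable if and only if its two bipartition classes have equal cardinality. -/

import Mathlib

open Matrix BigOperators

open Classical in
/-- An undirected graph is arbitrarily regularizable if there is a real weighting of its
edges, not identically zero, and `r > 0`, such that `B w = r e` where `B` is the
incidence matrix. -/
def ArbReg {V : Type*} [Fintype V] [DecidableEq V] (G : SimpleGraph V) : Prop :=
  ∃ (w : Sym2 V → ℝ) (r : ℝ), 0 < r ∧ w ≠ 0 ∧ (∀ e ∉ G.edgeSet, w e = 0) ∧
    G.incMatrix ℝ *ᵥ w = fun _ => r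

/-- `U` together with its complement is a bipartition of `G`. -/
def IsBipartition {V : Type*} (G : SimpleGraph V) (U : Set V) : Prop :=
  ∀ ⦃u v⦄, G.Adj u v → ((u ∈ U) ↔ (v ∉ U))

/-!
Every edge has exactly one end in `U`, so summing `B w` over `U` and over its complement both
give the total weight `∑ₑ w e`; with `B w = r e` this is `r |U| = r |Uᶜ|`.

Conversely, by the Fredholm alternative `e` lies in the range of `B` as soon as it is orthogonal
to every `x` with `xᵀ B = 0`, i.e. with `x a + x b = 0` along every edge. On a connected
bipartite graph such an `x` is `c` on `U` and `-c` on `Uᶜ`, so `∑ x = c (|U| - |Uᶜ|) = 0`.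
-/

open Finset

theorem Set.ncard_eq_card_filter_mem {α : Type*} [Fintype α] (s : Set α)
    [DecidablePred (· ∈ s)] :
    s.ncard = #{x | x ∈ s} := by
  rw [Set.ncard_eq_toFinset_card', Set.filter_mem_univ_eq_toFinset]

theorem Matrix.exists_mulVec_eq_of_forall_vecMul_eq_zero {K m n : Type*} [Field K]
    [Fintype m] [Fintype n] [DecidableEq m] [DecidableEq n] (A : Matrix m n K) {y : m → K}
    (hy : ∀ x, x ᵥ* A = 0 → x ⬝ᵥ y = 0) : ∃ w, A *ᵥ w = y := by
  have hmem : dotProductEquiv K m y ∈ (LinearMap.ker A.vecMulLinear).dualAnnihilator := by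
    simpa [Submodule.mem_dualAnnihilator, dotProduct_comm] using hy
  obtain ⟨ψ, hψ⟩ := (LinearMap.range_dualMap_eq_dualAnnihilator_ker _).ge hmem
  obtain ⟨w, rfl⟩ := (dotProductEquiv K n).surjective ψ
  refine ⟨w, funext fun i => ?_⟩
  simpa [mulVec, dotProduct_comm, Matrix.row] using LinearMap.congr_fun hψ (Pi.single i 1)

namespace SimpleGraph

variable {V : Type*} {G : SimpleGraph V}

theorem Reachable.apply_eq_of_forall_adj {α : Type*} {f : V → α}
    (hf : ∀ a b, G.Adj a b → f a = f b) {u v : V} (huv : G.Reachable u v) : f u = f v := by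
  obtain ⟨p⟩ := huv
  induction p with
  | nil => rfl
  | cons hadj _ ih => exact (hf _ _ hadj).trans ih

variable {R : Type*} [DecidableEq V] [DecidableRel G.Adj]

theorem incMatrix_apply_of_adj [AddMonoidWithOne R] {a b : V} (hab : G.Adj a b) (v : V) :
    G.incMatrix R v s(a, b) = (if v = a then 1 else 0) + (if v = b then 1 else 0) := by
  simp only [incMatrix_apply', mk'_mem_incidenceSet_iff, hab, true_and]
  by_cases hva : v = a <;> by_cases hvb : v = b <;> simp_all [hab.ne]

variable [Fintype V] [NonAssocSemiring R]

theorem vecMul_incMatrix_apply_of_adj (x : V → R) {a b : V} (hab : G.Adj a b) :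
    (x ᵥ* G.incMatrix R) s(a, b) = x a + x b := by
  simp [vecMul, dotProduct, incMatrix_apply_of_adj hab, mul_add, Finset.sum_add_distrib]

theorem incMatrix_mulVec_indicator_edgeSet (w : Sym2 V → R) :
    G.incMatrix R *ᵥ G.edgeSet.indicator w = G.incMatrix R *ᵥ w := by
  funext v
  simp only [mulVec, dotProduct]
  refine Finset.sum_congr rfl fun e _ => ?_
  by_cases he : e ∈ G.edgeSet
  · rw [Set.indicator_of_mem he]
  · rw [G.incMatrix_of_notMem_incidenceSet fun h => he h.1, zero_mul, zero_mul]

end SimpleGraph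

open SimpleGraph

namespace IsBipartition

variable {V : Type*} {G : SimpleGraph V} {U : Set V} [Fintype V] [DecidablePred (· ∈ U)]

theorem sum_eq_zero_of_forall_adj_add_eq_zero {M : Type*} [AddCommGroup M] (hU : IsBipartition G U)
    (hc : G.Connected) (hbal : #{v | v ∈ U} = #{v | v ∈ Uᶜ}) (x : V → M)
    (hx : ∀ a b, G.Adj a b → x a + x b = 0) : ∑ v, x v = 0 := by
  obtain ⟨v₀⟩ := hc.nonempty
  let f : V → M := fun v => if v ∈ U then x v else -x v
  have hf (v : V) : f v = f v₀ := by
    refine (hc.preconnected v v₀).apply_eq_of_forall_adj fun a b hab => ?_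
    by_cases ha : a ∈ U
    · simp [f, ha, (hU hab).mp ha, eq_neg_of_add_eq_zero_left (hx a b hab)]
    · simp [f, ha, not_not.mp ((hU hab).not.mp ha), neg_eq_of_add_eq_zero_right (hx a b hab)]
  calc ∑ v, x v = ∑ v with v ∈ U, x v + ∑ v with v ∈ Uᶜ, x v :=
        (Finset.sum_filter_add_sum_filter_not _ _ _).symm
    _ = ∑ v with v ∈ U, f v₀ + ∑ v with v ∈ Uᶜ, -f v₀ := by
        congr 1 <;> refine Finset.sum_congr rfl fun v hv => ?_ <;>
          simp only [Finset.mem_filter, Finset.mem_univ, true_and, Set.mem_compl_iff] at hv <;>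
          simp [← hf v, f, hv]
    _ = 0 := by simp [hbal]

variable {R : Type*} [DecidableEq V] [DecidableRel G.Adj] [NonAssocSemiring R]

theorem sum_incMatrix_apply_eq (hU : IsBipartition G U) (e : Sym2 V) :
    ∑ v with v ∈ U, G.incMatrix R v e = ∑ v with v ∈ Uᶜ, G.incMatrix R v e := by
  induction e using Sym2.ind with
  | h a b =>
    by_cases hab : G.Adj a b
    · simp only [incMatrix_apply_of_adj hab, Finset.sum_add_distrib, Finset.sum_ite_eq',
        Finset.mem_filter, Finset.mem_univ, true_and, Set.mem_compl_iff]
      by_cases ha : a ∈ U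
      · simp [ha, (hU hab).mp ha]
      · simp [ha, not_not.mp ((hU hab).not.mp ha)]
    · have hzero (v : V) : G.incMatrix R v s(a, b) = 0 :=
        G.incMatrix_of_notMem_incidenceSet fun h => hab h.1
      simp [hzero]

theorem sum_incMatrix_mulVec_eq (hU : IsBipartition G U) (w : Sym2 V → R) :
    ∑ v with v ∈ U, (G.incMatrix R *ᵥ w) v =
      ∑ v with v ∈ Uᶜ, (G.incMatrix R *ᵥ w) v := by
  simp only [mulVec, dotProduct, Finset.sum_comm (s := Finset.filter _ _), ← Finset.sum_mul,
    hU.sum_incMatrix_apply_eq]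

end IsBipartition

open Classical in
theorem arbReg_of_incMatrix_mulVec_eq_const {V : Type*} [Fintype V] [DecidableEq V] [Nonempty V]
    {G : SimpleGraph V} {w : Sym2 V → ℝ} {r : ℝ} (hr : 0 < r)
    (hw : G.incMatrix ℝ *ᵥ w = fun _ => r) : ArbReg G := by
  have hind := (incMatrix_mulVec_indicator_edgeSet w).trans hw
  refine ⟨G.edgeSet.indicator w, r, hr, fun h0 => ?_, fun e he => Set.indicator_of_notMem he w,
    hind⟩
  have := congrFun hind (Classical.arbitrary V)
  simp [h0] at this
  exact hr.ne this

theorem tree_arb_reg_iff_balanced_general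
    {V : Type*} [Fintype V] [DecidableEq V] (G : SimpleGraph V)
    (hc : G.Connected) (U : Set V) (hU : IsBipartition G U) :
    ArbReg G ↔ U.ncard = Uᶜ.ncard := by
  classical
  rw [Set.ncard_eq_card_filter_mem U, Set.ncard_eq_card_filter_mem Uᶜ]
  constructor
  · rintro ⟨w, r, hr, -, -, hw⟩
    have hsum := hU.sum_incMatrix_mulVec_eq w
    simp only [hw, Finset.sum_const, nsmul_eq_mul] at hsum
    exact_mod_cast mul_right_cancel₀ hr.ne' hsum
  · intro hbal
    have : Nonempty V := hc.nonempty
    have hortho (x : V → ℝ) (hx : x ᵥ* G.incMatrix ℝ = 0) : x ⬝ᵥ (fun _ => 1) = 0 := by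
      simpa [dotProduct] using hU.sum_eq_zero_of_forall_adj_add_eq_zero hc hbal x
        fun a b hab => by rw [← vecMul_incMatrix_apply_of_adj x hab, hx, Pi.zero_apply]
    obtain ⟨w, hw⟩ := (G.incMatrix ℝ).exists_mulVec_eq_of_forall_vecMul_eq_zero hortho
    exact arbReg_of_incMatrix_mulVec_eq_const one_pos hw

/-- A tree is arbitrarily regularizable iff its two bipartition classes have equal
cardinality. -/
theorem tree_arb_reg_iff_balanced
    {V : Type*} [Fintype V] [DecidableEq V] (G : SimpleGraph V)
    (hc : G.Connected) (hac : G.IsAcyclic) (U : Set V) (hU : IsBipartition G U) :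
    ArbReg G ↔ U.ncard = Uᶜ.ncard :=
  tree_arb_reg_iff_balanced_general G hc U hU
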